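/- Suppose for each ν ∈ {1,…,n} and each v ∈ V a continuously differentiable function H_ν(v) : [-r,0] → ℝ is given with L(H_ν(v)·e_ν) = 0 and (H_ν(v))'(0) = 1. Define S : W × V → ℝ^{nk} by S_{(κ-1)n+ν}(η,v) = v_{(κ-1)n+ν} - g_ν(v)·H_ν(v)(-d_κ(η)), and assume that for every η ∈ W the map S_η = S(η,·) : V → ℝ^{nk} is injective. Let 𝒰 = {φ : [-r,0] → ℝ^n C¹ : Lφ ∈ W, φ̂ ∈ V}, 𝒪 = {χ : [-r,0] → ℝ^n C¹ : Lχ ∈ W, χ̂ ∈ S_{Lχ}(V)}, X_f = {φ ∈ 𝒰 : φ'(0) = g(φ̂)}, and X₀ = {χ : [-r,0] → ℝ^n C¹ : χ'(0) = 0}. Define A on 𝒰 by (A(φ))_ν(t) = φ_ν(t) - g_ν(φ̂)·H_ν(φ̂)(t). Then A restricts to a bijection from X_f onto X₀ ∩ 𝒪, and A(φ) = φ for every φ ∈ X_f ∩ X₀. -/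

import Mathlib

/-!
Subtracting `g(φ̂)_ν · H_ν(φ̂)` from `φ_ν` leaves `Lφ` unchanged because `L(H_ν · e_ν) = 0`, hence
it leaves the delays `d_κ(Lφ)` unchanged, and it lowers `φ'(0)` by exactly `g(φ̂)` because
`H_ν'(0) = 1`. So `A` sends the equation `φ'(0) = g(φ̂)` to `χ'(0) = 0`, and the new delayed values
are `χ̂ = S_{Lφ}(φ̂)`. Conversely `φ` is recovered from `χ` and `v = φ̂` by adding the correction
back, and `v` is determined by `χ̂` through the injectivity of `S_{Lχ}`.
-/

/-- The restriction of a function `ℝ → E` to `[-r,0]` as a continuous map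
(junk value `0` if the function is not continuous on `[-r,0]`). -/
noncomputable def restrC {E : Type*} [TopologicalSpace E] [Zero E] (r : ℝ) (φ : ℝ → E) :
    C(Set.Icc (-r) (0:ℝ), E) := by
  classical exact
    if h : ContinuousOn φ (Set.Icc (-r) 0) then ⟨(Set.Icc (-r) 0).restrict φ, h.restrict⟩ else 0

lemma restrC_apply {E : Type*} [TopologicalSpace E] [Zero E] {r : ℝ} {f : ℝ → E}
    (hf : ContinuousOn f (Set.Icc (-r) 0)) (x : Set.Icc (-r) (0:ℝ)) :
    restrC r f x = f x := by
  simp only [restrC, dif_pos hf]; rfl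

section Perturb

variable {n : ℕ}

def perturb (h : Fin n → ℝ → ℝ) (c : Fin n → ℝ) (φ : ℝ → Fin n → ℝ) : ℝ → Fin n → ℝ :=
  fun t ν => φ t ν - c ν * h ν t

variable {h : Fin n → ℝ → ℝ} {c : Fin n → ℝ} {φ : ℝ → Fin n → ℝ}

lemma perturb_perturb_neg (h : Fin n → ℝ → ℝ) (c : Fin n → ℝ) (φ : ℝ → Fin n → ℝ) :
    perturb h c (perturb h (-c) φ) = φ := by
  funext t ν
  simp only [perturb, Pi.neg_apply]
  ring

@[simp]
lemma perturb_zero (h : Fin n → ℝ → ℝ) (φ : ℝ → Fin n → ℝ) : perturb h 0 φ = φ := by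
  funext t ν
  simp [perturb]

lemma perturb_injective (h : Fin n → ℝ → ℝ) (c : Fin n → ℝ) : Function.Injective (perturb h c) :=
  Function.LeftInverse.injective (g := perturb h (-c)) fun φ => by
    simpa only [neg_neg] using perturb_perturb_neg h (-c) φ

lemma contDiff_perturb {m : WithTop ℕ∞} (hφ : ContDiff ℝ m φ) (hh : ∀ ν, ContDiff ℝ m (h ν)) :
    ContDiff ℝ m (perturb h c φ) :=
  contDiff_pi.2 fun ν => (contDiff_pi.1 hφ ν).sub (contDiff_const.mul (hh ν))

lemma hasDerivAt_perturb {t : ℝ} {φ' : Fin n → ℝ} (hφ : HasDerivAt φ φ' t)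
    (hh : ∀ ν, HasDerivAt (h ν) 1 t) : HasDerivAt (perturb h c φ) (φ' - c) t := by
  refine hasDerivAt_pi.2 fun ν => ?_
  have hν := (hasDerivAt_pi.1 hφ ν).sub ((hh ν).const_mul (c ν))
  rw [mul_one] at hν
  exact hν

lemma restrC_perturb (r : ℝ) (hφ : Continuous φ) (hh : ∀ ν, Continuous (h ν)) :
    restrC r (perturb h c φ) =
      restrC r φ - ∑ ν, c ν • restrC r (fun t => Pi.single ν (h ν t)) := by
  have hsingle : ∀ ν, Continuous fun t => (Pi.single ν (h ν t) : Fin n → ℝ) :=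
    fun ν => (continuous_single ν).comp (hh ν)
  ext x μ
  simp only [ContinuousMap.sub_apply, ContinuousMap.sum_apply, ContinuousMap.smul_apply,
    restrC_apply (contDiff_perturb (m := 0) (contDiff_zero.2 hφ)
      fun ν => contDiff_zero.2 (hh ν)).continuous.continuousOn,
    restrC_apply hφ.continuousOn, restrC_apply (hsingle _).continuousOn]
  simp [perturb, Pi.single_apply, mul_ite]

lemma map_restrC_perturb {r : ℝ} {F : Type*} [NormedAddCommGroup F] [NormedSpace ℝ F]
    (L : C(Set.Icc (-r) (0:ℝ), Fin n → ℝ) →L[ℝ] F) (hφ : Continuous φ)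
    (hh : ∀ ν, Continuous (h ν)) (hL : ∀ ν, L (restrC r fun t => Pi.single ν (h ν t)) = 0) :
    L (restrC r (perturb h c φ)) = L (restrC r φ) := by
  simp [restrC_perturb r hφ hh, hL]

end Perturb

section AlmostGraph

variable {r : ℝ} {n k : ℕ} {F : Type*} [NormedAddCommGroup F] [NormedSpace ℝ F]
  (L : C(Set.Icc (-r) (0:ℝ), Fin n → ℝ) →L[ℝ] F) (d : Fin k → F → ℝ)
  (g : (Fin k × Fin n → ℝ) → Fin n → ℝ) (H : Fin n → (Fin k × Fin n → ℝ) → ℝ → ℝ)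

noncomputable section

/-- `φ̂`, with the index `(κ-1)n+ν` encoded as `(κ, ν)`. -/
def delayHat (φ : ℝ → Fin n → ℝ) : Fin k × Fin n → ℝ :=
  fun i => φ (-(d i.1 (L (restrC r φ)))) i.2

/-- The map `S_η` of the paper. -/
def delayShift (η : F) (v : Fin k × Fin n → ℝ) : Fin k × Fin n → ℝ :=
  fun i => v i - g v i.2 * H i.2 v (-(d i.1 η))

/-- The map `A` of the paper. -/
def almostGraphMap (φ : ℝ → Fin n → ℝ) : ℝ → Fin n → ℝ :=
  perturb (fun ν => H ν (delayHat L d φ)) (g (delayHat L d φ)) φ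

end

variable {L d g H} {V : Set (Fin k × Fin n → ℝ)} {w : Fin k × Fin n → ℝ}
  {c : Fin n → ℝ} {φ ψ : ℝ → Fin n → ℝ}

lemma map_restrC_perturb_of_mem (hH : ∀ ν, ∀ w ∈ V, ContDiff ℝ 1 (H ν w))
    (hHL : ∀ ν, ∀ w ∈ V, L (restrC r (fun t => Pi.single ν (H ν w t))) = 0)
    (hw : w ∈ V) (hφ : Continuous φ) :
    L (restrC r (perturb (fun ν => H ν w) c φ)) = L (restrC r φ) :=
  map_restrC_perturb L hφ (fun ν => (hH ν w hw).continuous) fun ν => hHL ν w hw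

lemma deriv_perturb_of_mem (hH : ∀ ν, ∀ w ∈ V, ContDiff ℝ 1 (H ν w))
    (hH1 : ∀ ν, ∀ w ∈ V, deriv (H ν w) 0 = 1) (hw : w ∈ V) (hφ : ContDiff ℝ 1 φ) :
    deriv (perturb (fun ν => H ν w) c φ) 0 = deriv φ 0 - c := by
  refine (hasDerivAt_perturb (hφ.differentiable one_ne_zero 0).hasDerivAt fun ν => ?_).deriv
  simpa only [hH1 ν w hw] using ((hH ν w hw).differentiable one_ne_zero 0).hasDerivAt

lemma delayHat_perturb_of_mem (hH : ∀ ν, ∀ w ∈ V, ContDiff ℝ 1 (H ν w))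
    (hHL : ∀ ν, ∀ w ∈ V, L (restrC r (fun t => Pi.single ν (H ν w t))) = 0)
    (hw : w ∈ V) (hφ : Continuous φ) :
    delayHat L d (perturb (fun ν => H ν w) c φ) =
      fun i => delayHat L d φ i - c i.2 * H i.2 w (-(d i.1 (L (restrC r φ)))) := by
  unfold delayHat
  rw [map_restrC_perturb_of_mem hH hHL hw hφ]
  rfl

lemma contDiff_almostGraphMap (hH : ∀ ν, ∀ w ∈ V, ContDiff ℝ 1 (H ν w))
    (hφV : delayHat L d φ ∈ V) (hφ : ContDiff ℝ 1 φ) :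
    ContDiff ℝ 1 (almostGraphMap L d g H φ) :=
  contDiff_perturb hφ fun ν => hH ν _ hφV

lemma map_restrC_almostGraphMap (hH : ∀ ν, ∀ w ∈ V, ContDiff ℝ 1 (H ν w))
    (hHL : ∀ ν, ∀ w ∈ V, L (restrC r (fun t => Pi.single ν (H ν w t))) = 0)
    (hφV : delayHat L d φ ∈ V) (hφ : Continuous φ) :
    L (restrC r (almostGraphMap L d g H φ)) = L (restrC r φ) :=
  map_restrC_perturb_of_mem hH hHL hφV hφ

lemma deriv_almostGraphMap (hH : ∀ ν, ∀ w ∈ V, ContDiff ℝ 1 (H ν w))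
    (hH1 : ∀ ν, ∀ w ∈ V, deriv (H ν w) 0 = 1) (hφV : delayHat L d φ ∈ V)
    (hφ : ContDiff ℝ 1 φ) :
    deriv (almostGraphMap L d g H φ) 0 = deriv φ 0 - g (delayHat L d φ) :=
  deriv_perturb_of_mem hH hH1 hφV hφ

lemma delayHat_almostGraphMap (hH : ∀ ν, ∀ w ∈ V, ContDiff ℝ 1 (H ν w))
    (hHL : ∀ ν, ∀ w ∈ V, L (restrC r (fun t => Pi.single ν (H ν w t))) = 0)
    (hφV : delayHat L d φ ∈ V) (hφ : Continuous φ) :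
    delayHat L d (almostGraphMap L d g H φ) =
      delayShift d g H (L (restrC r (almostGraphMap L d g H φ))) (delayHat L d φ) := by
  rw [map_restrC_almostGraphMap hH hHL hφV hφ]
  exact delayHat_perturb_of_mem hH hHL hφV hφ

lemma almostGraphMap_eq_self (hg : g (delayHat L d φ) = 0) : almostGraphMap L d g H φ = φ := by
  rw [almostGraphMap, hg, perturb_zero]

lemma eq_of_almostGraphMap_eq {W : Set F} (hH : ∀ ν, ∀ w ∈ V, ContDiff ℝ 1 (H ν w))
    (hHL : ∀ ν, ∀ w ∈ V, L (restrC r (fun t => Pi.single ν (H ν w t))) = 0)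
    (hSinj : ∀ η ∈ W, Set.InjOn (delayShift d g H η) V)
    (hφ : Continuous φ) (hψ : Continuous ψ) (hφW : L (restrC r φ) ∈ W)
    (hφV : delayHat L d φ ∈ V) (hψV : delayHat L d ψ ∈ V)
    (hφψ : almostGraphMap L d g H φ = almostGraphMap L d g H ψ) : φ = ψ := by
  have hη : L (restrC r (almostGraphMap L d g H φ)) ∈ W := by
    rwa [map_restrC_almostGraphMap hH hHL hφV hφ]
  have hhat : delayHat L d φ = delayHat L d ψ := by
    refine hSinj _ hη hφV hψV ?_
    rw [← delayHat_almostGraphMap hH hHL hφV hφ, hφψ]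
    exact delayHat_almostGraphMap hH hHL hψV hψ
  unfold almostGraphMap at hφψ
  rw [hhat] at hφψ
  exact perturb_injective _ _ hφψ

lemma delayHat_perturb_neg (hH : ∀ ν, ∀ w ∈ V, ContDiff ℝ 1 (H ν w))
    (hHL : ∀ ν, ∀ w ∈ V, L (restrC r (fun t => Pi.single ν (H ν w t))) = 0)
    (hw : w ∈ V) (hφ : Continuous φ)
    (hφw : delayHat L d φ = delayShift d g H (L (restrC r φ)) w) :
    delayHat L d (perturb (fun ν => H ν w) (-g w) φ) = w := by
  rw [delayHat_perturb_of_mem hH hHL hw hφ, hφw]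
  funext i
  simp only [delayShift, Pi.neg_apply]
  ring

end AlmostGraph

/-- Functions on `[-r,0]` are encoded as `C¹` functions on `ℝ`. -/
theorem stmt15_general (r : ℝ) (n k : ℕ)
    {F : Type*} [NormedAddCommGroup F] [NormedSpace ℝ F]
    (L : C(Set.Icc (-r) (0:ℝ), Fin n → ℝ) →L[ℝ] F)
    (W : Set F)
    (d : Fin k → F → ℝ)
    (V : Set (Fin k × Fin n → ℝ))
    (g : (Fin k × Fin n → ℝ) → Fin n → ℝ)
    (H : Fin n → (Fin k × Fin n → ℝ) → ℝ → ℝ)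
    (hH : ∀ ν, ∀ w ∈ V, ContDiff ℝ 1 (H ν w))
    (hH1 : ∀ ν, ∀ w ∈ V, deriv (H ν w) 0 = 1)
    (hHL : ∀ ν, ∀ w ∈ V, L (restrC r (fun t => Pi.single ν (H ν w t))) = 0)
    (S : F → (Fin k × Fin n → ℝ) → Fin k × Fin n → ℝ)
    (hS : S = fun η v i => v i - g v i.2 * H i.2 v (-(d i.1 η)))
    (hSinj : ∀ η ∈ W, Set.InjOn (S η) V)
    (U : Set (ℝ → Fin n → ℝ))
    (hU : U = {φ | ContDiff ℝ 1 φ ∧ L (restrC r φ) ∈ W ∧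
      (fun i : Fin k × Fin n => φ (-(d i.1 (L (restrC r φ)))) i.2) ∈ V})
    (O : Set (ℝ → Fin n → ℝ))
    (hO : O = {χ | ContDiff ℝ 1 χ ∧ L (restrC r χ) ∈ W ∧
      (fun i : Fin k × Fin n => χ (-(d i.1 (L (restrC r χ)))) i.2) ∈ S (L (restrC r χ)) '' V})
    (Xf : Set (ℝ → Fin n → ℝ))
    (hXf : Xf = {φ ∈ U |
      deriv φ 0 = g (fun i : Fin k × Fin n => φ (-(d i.1 (L (restrC r φ)))) i.2)})
    (X0 : Set (ℝ → Fin n → ℝ))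
    (hX0 : X0 = {χ | ContDiff ℝ 1 χ ∧ deriv χ 0 = 0})
    (A : (ℝ → Fin n → ℝ) → ℝ → Fin n → ℝ)
    (hA : A = fun φ t ν => φ t ν -
      g (fun i : Fin k × Fin n => φ (-(d i.1 (L (restrC r φ)))) i.2) ν *
        H ν (fun i : Fin k × Fin n => φ (-(d i.1 (L (restrC r φ)))) i.2) t) :
    Set.BijOn A Xf (X0 ∩ O) ∧ ∀ φ ∈ Xf ∩ X0, A φ = φ := by
  obtain rfl : A = almostGraphMap L d g H := hA
  obtain rfl : S = delayShift d g H := hS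
  subst hU hO hXf hX0
  refine ⟨⟨?_, ?_, ?_⟩, ?_⟩
  · rintro φ ⟨⟨hφ, hφW, hφV⟩, hφ'⟩
    refine ⟨⟨contDiff_almostGraphMap hH hφV hφ, ?_⟩, contDiff_almostGraphMap hH hφV hφ, ?_,
      _, hφV, (delayHat_almostGraphMap hH hHL hφV hφ.continuous).symm⟩
    · rw [deriv_almostGraphMap hH hH1 hφV hφ]
      exact sub_eq_zero.2 hφ'
    · rwa [map_restrC_almostGraphMap hH hHL hφV hφ.continuous]
  · rintro φ ⟨⟨hφ, hφW, hφV⟩, -⟩ ψ ⟨⟨hψ, -, hψV⟩, -⟩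
    exact eq_of_almostGraphMap_eq hH hHL hSinj hφ.continuous hψ.continuous hφW hφV hψV
  · rintro χ ⟨⟨hχ, hχ'⟩, -, hχW, v, hv, hχv⟩
    set φ := perturb (fun ν => H ν v) (-g v) χ
    have hφhat : delayHat L d φ = v := delayHat_perturb_neg hH hHL hv hχ.continuous hχv.symm
    refine ⟨φ, ⟨⟨contDiff_perturb hχ fun ν => hH ν v hv, ?_, ?_⟩, ?_⟩, ?_⟩
    · rwa [map_restrC_perturb_of_mem hH hHL hv hχ.continuous]
    · change delayHat L d φ ∈ V
      rwa [hφhat]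
    · change deriv φ 0 = g (delayHat L d φ)
      rw [deriv_perturb_of_mem hH hH1 hv hχ, hχ', hφhat, zero_sub, neg_neg]
    · rw [almostGraphMap, hφhat, perturb_perturb_neg]
  · rintro φ ⟨⟨-, hφ'⟩, -, hφ0⟩
    exact almostGraphMap_eq_self (hφ'.symm.trans hφ0)

/-- Set-theoretic content of Theorem 3.5: with `L(H_ν(v)·e_ν) = 0`, `(H_ν(v))'(0) = 1`,
`S_η(v)_{(κ-1)n+ν} = v_{(κ-1)n+ν} - g_ν(v)·H_ν(v)(-d_κ(η))` injective on `V` for each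
`η ∈ W`, `𝒰 = {φ C¹ : Lφ ∈ W, φ̂ ∈ V}`, `𝒪 = {χ C¹ : Lχ ∈ W, χ̂ ∈ S_{Lχ}(V)}`,
`X_f = {φ ∈ 𝒰 : φ'(0) = g(φ̂)}`, `X₀ = {χ C¹ : χ'(0) = 0}`, and
`A(φ)_ν = φ_ν - g_ν(φ̂)·H_ν(φ̂)`, the map `A` restricts to a bijection from `X_f` onto
`X₀ ∩ 𝒪`, and `A(φ) = φ` for every `φ ∈ X_f ∩ X₀`.
Functions on `[-r,0]` are encoded via `C¹` functions on `ℝ`. -/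
theorem stmt15 (r : ℝ) (hr : 0 < r) (n k : ℕ) (hn : 0 < n) (hk : 0 < k)
    {F : Type*} [NormedAddCommGroup F] [NormedSpace ℝ F] [FiniteDimensional ℝ F]
    (L : C(Set.Icc (-r) (0:ℝ), Fin n → ℝ) →L[ℝ] F)
    (W : Set F) (hWopen : IsOpen W) (hWne : W.Nonempty)
    (d : Fin k → F → ℝ) (hd : ∀ κ, ContDiffOn ℝ 1 (d κ) W)
    (hdr : ∀ κ, ∀ η ∈ W, d κ η ∈ Set.Icc (0:ℝ) r)
    (V : Set (Fin k × Fin n → ℝ)) (hVopen : IsOpen V) (hVne : V.Nonempty)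
    (g : (Fin k × Fin n → ℝ) → Fin n → ℝ) (hg : ContDiffOn ℝ 1 g V)
    (H : Fin n → (Fin k × Fin n → ℝ) → ℝ → ℝ)
    (hH : ∀ ν, ∀ w ∈ V, ContDiff ℝ 1 (H ν w))
    (hH1 : ∀ ν, ∀ w ∈ V, deriv (H ν w) 0 = 1)
    (hHL : ∀ ν, ∀ w ∈ V, L (restrC r (fun t => Pi.single ν (H ν w t))) = 0)
    (S : F → (Fin k × Fin n → ℝ) → Fin k × Fin n → ℝ)
    (hS : S = fun η v i => v i - g v i.2 * H i.2 v (-(d i.1 η)))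
    (hSinj : ∀ η ∈ W, Set.InjOn (S η) V)
    (U : Set (ℝ → Fin n → ℝ))
    (hU : U = {φ | ContDiff ℝ 1 φ ∧ L (restrC r φ) ∈ W ∧
      (fun i : Fin k × Fin n => φ (-(d i.1 (L (restrC r φ)))) i.2) ∈ V})
    (O : Set (ℝ → Fin n → ℝ))
    (hO : O = {χ | ContDiff ℝ 1 χ ∧ L (restrC r χ) ∈ W ∧
      (fun i : Fin k × Fin n => χ (-(d i.1 (L (restrC r χ)))) i.2) ∈ S (L (restrC r χ)) '' V})
    (Xf : Set (ℝ → Fin n → ℝ))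
    (hXf : Xf = {φ ∈ U |
      deriv φ 0 = g (fun i : Fin k × Fin n => φ (-(d i.1 (L (restrC r φ)))) i.2)})
    (X0 : Set (ℝ → Fin n → ℝ))
    (hX0 : X0 = {χ | ContDiff ℝ 1 χ ∧ deriv χ 0 = 0})
    (A : (ℝ → Fin n → ℝ) → ℝ → Fin n → ℝ)
    (hA : A = fun φ t ν => φ t ν -
      g (fun i : Fin k × Fin n => φ (-(d i.1 (L (restrC r φ)))) i.2) ν *
        H ν (fun i : Fin k × Fin n => φ (-(d i.1 (L (restrC r φ)))) i.2) t) :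
    Set.BijOn A Xf (X0 ∩ O) ∧ ∀ φ ∈ Xf ∩ X0, A φ = φ :=
  stmt15_general r n k L W d V g H hH hH1 hHL S hS hSinj U hU O hO Xf hXf X0 hX0 A hA
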